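/- arXiv:2202.00771 — 2 statements merged into one kernel-verified Lean document; each statement's English description precedes it below -/
import Mathlib

section
/- Let C_p be the (N-p)×N full row-rank synchronization matrix and A a symmetric positive semi-definite N×N real matrix. Then A maps Ker(C_p) into Ker(C_p) if and only if there exists a symmetric positive semi-definite (N-p)×(N-p) matrix Ā_p such that (C_p C_pᵀ)^{-1/2} C_p A = Ā_p (C_p C_pᵀ)^{-1/2} C_p. -/
open Matrix

open scoped ComplexOrder in
/-- The square root of a positive semidefinite matrix, as `Matrix.PosSemidef.sqrt` was defined
in the older Mathlib (removed since). -/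
noncomputable def Matrix.PosSemidef.sqrt {n 𝕜 : Type*} [Fintype n] [DecidableEq n] [RCLike 𝕜]
    {A : Matrix n n 𝕜} (hA : A.PosSemidef) : Matrix n n 𝕜 :=
  hA.1.eigenvectorUnitary.1 * diagonal ((↑) ∘ (√·) ∘ hA.1.eigenvalues) *
    (star hA.1.eigenvectorUnitary : Matrix n n 𝕜)

/-!
Write `S = (C Cᵀ)^{1/2}` and `D = S⁻¹ C`. Full row rank makes `C Cᵀ`, hence `S`, invertible,
so `Ker D = Ker C`, and `D Dᵀ = S⁻¹ (C Cᵀ) S⁻¹ = 1`: `Dᵀ D` is the orthogonal projection onto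
`(Ker C)ᗮ`. If `A` preserves `Ker D`, then `D A (1 - Dᵀ D) = 0` because `1 - Dᵀ D` maps into
`Ker D`; thus `D A = (D A Dᵀ) D`, and `Ā = D A Dᵀ` is positive semidefinite along with `A`.
The converse is immediate from `D A = Ā D`.
-/

namespace Matrix

section Sqrt

variable {n 𝕜 : Type*} [Fintype n] [DecidableEq n] [RCLike 𝕜] {A : Matrix n n 𝕜}

open scoped ComplexOrder

lemma PosSemidef.sqrt_mul_self (hA : A.PosSemidef) : hA.sqrt * hA.sqrt = A := by
  set U : Matrix n n 𝕜 := hA.1.eigenvectorUnitary.1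
  set Λ : Matrix n n 𝕜 := diagonal ((↑) ∘ (√·) ∘ hA.1.eigenvalues)
  have hUU : star U * U = 1 := Unitary.coe_star_mul_self _
  have hΛΛ : Λ * Λ = diagonal ((↑) ∘ hA.1.eigenvalues) := by
    rw [diagonal_mul_diagonal]
    congr 1
    funext i
    simp only [Function.comp_apply, ← RCLike.ofReal_mul,
      Real.mul_self_sqrt (hA.eigenvalues_nonneg i)]
  calc hA.sqrt * hA.sqrt = U * (Λ * (star U * U) * Λ) * star U := by
        simp only [PosSemidef.sqrt, U, Λ, Matrix.mul_assoc]
    _ = A := by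
        rw [hUU, Matrix.mul_one, hΛΛ]
        conv_rhs => rw [hA.1.spectral_theorem, Unitary.conjStarAlgAut_apply]

lemma PosSemidef.isHermitian_sqrt (hA : A.PosSemidef) : hA.sqrt.IsHermitian := by
  rw [IsHermitian, PosSemidef.sqrt, conjTranspose_mul, conjTranspose_mul, diagonal_conjTranspose,
    ← star_eq_conjTranspose, ← star_eq_conjTranspose, star_star, Matrix.mul_assoc]
  congr 2
  funext i j
  simp [diagonal_apply]

lemma PosSemidef.isUnit_sqrt (hA : A.PosSemidef) (hU : IsUnit A) : IsUnit hA.sqrt := by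
  rw [isUnit_iff_isUnit_det] at hU ⊢
  rw [← hA.sqrt_mul_self, det_mul] at hU
  exact isUnit_of_mul_isUnit_left hU

end Sqrt

theorem isUnit_of_rank_eq_card {n K : Type*} [Fintype n] [DecidableEq n] [Field K]
    {A : Matrix n n K} (h : A.rank = Fintype.card n) : IsUnit A := by
  refine mulVec_surjective_iff_isUnit.mp ((LinearMap.range_eq_top (f := A.mulVecLin)).mp ?_)
  exact Submodule.eq_top_of_finrank_eq (by rw [← rank, h, Module.finrank_fintype_fun_eq_card])

theorem inv_mul_mulVec_eq_zero_iff {m n K : Type*} [Fintype m] [DecidableEq m] [Field K]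
    [Fintype n] {M : Matrix m m K} (hM : IsUnit M) (C : Matrix m n K) (x : n → K) :
    (M⁻¹ * C) *ᵥ x = 0 ↔ C *ᵥ x = 0 := by
  rw [← mulVec_mulVec]
  exact (mulVec_injective_iff_isUnit.mpr (isUnit_nonsing_inv_iff.mpr hM)).eq_iff' (mulVec_zero _)

theorem sqrt_inv_mul_mul_transpose_eq_one {m n : Type*} [Fintype m] [DecidableEq m] [Fintype n]
    {C : Matrix m n ℝ} (hCC : (C * Cᵀ).PosSemidef) (hU : IsUnit (C * Cᵀ)) :
    hCC.sqrt⁻¹ * C * (hCC.sqrt⁻¹ * C)ᵀ = 1 := by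
  set S := hCC.sqrt
  have hS : IsUnit S.det := (isUnit_iff_isUnit_det S).mp (hCC.isUnit_sqrt hU)
  have hST : Sᵀ = S := by simpa using hCC.isHermitian_sqrt.eq
  calc S⁻¹ * C * (S⁻¹ * C)ᵀ = S⁻¹ * (C * Cᵀ) * S⁻¹ := by
        rw [transpose_mul, transpose_nonsing_inv, hST, Matrix.mul_assoc, Matrix.mul_assoc,
          Matrix.mul_assoc]
    _ = 1 := by
        rw [← hCC.sqrt_mul_self, ← Matrix.mul_assoc, nonsing_inv_mul _ hS, Matrix.one_mul,
          mul_nonsing_inv _ hS]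

section OrthonormalRows

variable {m n : Type*} [Fintype m] [DecidableEq m] [Fintype n] [DecidableEq n]

theorem mul_eq_mul_transpose_mul_of_mapsTo_ker {R : Type*} [CommRing R] {D : Matrix m n R}
    (hD : D * Dᵀ = 1) {A : Matrix n n R} (hA : ∀ x, D *ᵥ x = 0 → D *ᵥ (A *ᵥ x) = 0) :
    D * A = D * A * Dᵀ * D := by
  refine ext_of_mulVec_single fun i ↦ ?_
  set x : n → R := Pi.single i 1
  have hker : D *ᵥ (x - Dᵀ *ᵥ (D *ᵥ x)) = 0 := by
    rw [mulVec_sub, mulVec_mulVec, hD, one_mulVec, sub_self]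
  have hAker := hA _ hker
  rw [mulVec_sub, mulVec_sub, mulVec_mulVec, mulVec_mulVec, mulVec_mulVec, mulVec_mulVec,
    sub_eq_zero] at hAker
  simpa only [Matrix.mul_assoc] using hAker

theorem mapsTo_ker_iff_exists_posSemidef {D : Matrix m n ℝ} (hD : D * Dᵀ = 1)
    {A : Matrix n n ℝ} (hA : A.PosSemidef) :
    (∀ x, D *ᵥ x = 0 → D *ᵥ (A *ᵥ x) = 0) ↔
      ∃ B : Matrix m m ℝ, B.PosSemidef ∧ D * A = B * D := by
  refine ⟨fun h ↦ ⟨D * A * Dᵀ, ?_, mul_eq_mul_transpose_mul_of_mapsTo_ker hD h⟩, ?_⟩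
  · simpa using hA.mul_mul_conjTranspose_same D
  · rintro ⟨B, -, hB⟩ x hx
    rw [mulVec_mulVec, hB, ← mulVec_mulVec, hx, mulVec_zero]

end OrthonormalRows

end Matrix

theorem stmt2_general (N p : ℕ)
    (C : Matrix (Fin (N - p)) (Fin N) ℝ) (hC : C.rank = N - p)
    (hCC : (C * Cᵀ).PosSemidef)
    (A : Matrix (Fin N) (Fin N) ℝ) (hA : A.PosSemidef) :
    (∀ x : Fin N → ℝ, C.mulVec x = 0 → C.mulVec (A.mulVec x) = 0) ↔
      ∃ Abar : Matrix (Fin (N - p)) (Fin (N - p)) ℝ, Abar.PosSemidef ∧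
        hCC.sqrt⁻¹ * C * A = Abar * (hCC.sqrt⁻¹ * C) := by
  have hU : IsUnit (C * Cᵀ) :=
    isUnit_of_rank_eq_card (by rw [rank_self_mul_transpose, hC, Fintype.card_fin])
  have hS : IsUnit hCC.sqrt := hCC.isUnit_sqrt hU
  simp only [← inv_mul_mulVec_eq_zero_iff hS C]
  exact mapsTo_ker_iff_exists_posSemidef (sqrt_inv_mul_mul_transpose_eq_one hCC hU) hA

theorem stmt2 (N p : ℕ) (hp : p < N)
    (C : Matrix (Fin (N - p)) (Fin N) ℝ) (hC : C.rank = N - p)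
    (hCC : (C * Cᵀ).PosSemidef)
    (A : Matrix (Fin N) (Fin N) ℝ) (hA : A.PosSemidef) :
    (∀ x : Fin N → ℝ, C.mulVec x = 0 → C.mulVec (A.mulVec x) = 0) ↔
      ∃ Abar : Matrix (Fin (N - p)) (Fin (N - p)) ℝ, Abar.PosSemidef ∧
        hCC.sqrt⁻¹ * C * A = Abar * (hCC.sqrt⁻¹ * C) :=
  stmt2_general N p C hC hCC A hA
end

section
/- Let C_p be the (N-p)×N full row-rank synchronization matrix and D a symmetric positive semi-definite N×N real matrix. Then Ker(C_p) ⊆ Ker(D) if and only if there exists a symmetric positive semi-definite (N-p)×(N-p) matrix R such that D = C_pᵀ R C_p. -/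
/-!
Write `D = Bᴴ B`. Then `Ker B = Ker D ⊇ Ker C`, so `B` factors through `C` as `B = X C`, and
`D = Cᴴ (Xᴴ X) C`. Conversely `Ker C ⊆ Ker (Cᴴ R C)` for any `R`.
-/

open Matrix
open scoped MatrixOrder ComplexOrder

theorem LinearMap.exists_comp_eq_of_ker_le {K V W U : Type*} [Field K] [AddCommGroup V] [Module K V]
    [AddCommGroup W] [Module K W] [AddCommGroup U] [Module K U]
    (f : V →ₗ[K] W) (g : V →ₗ[K] U) (h : ker f ≤ ker g) :
    ∃ g' : W →ₗ[K] U, g' ∘ₗ f = g := by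
  obtain ⟨g', hg'⟩ :=
    LinearMap.exists_extend ((ker f).liftQ g h ∘ₗ f.quotKerEquivRange.symm.toLinearMap)
  refine ⟨g', LinearMap.ext fun x => ?_⟩
  simpa [LinearMap.quotKerEquivRange_symm_apply_image] using
    congr($hg' ⟨f x, LinearMap.mem_range_self f x⟩)

namespace Matrix

variable {K 𝕜 l m n : Type*} [Fintype m] [Fintype n]

theorem exists_eq_mul_of_ker_le [Field K] {B : Matrix l n K} {C : Matrix m n K}
    (h : ∀ x, C *ᵥ x = 0 → B *ᵥ x = 0) : ∃ X : Matrix l m K, B = X * C := by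
  classical
  obtain ⟨g, hg⟩ := LinearMap.exists_comp_eq_of_ker_le (toLin' C) (toLin' B) h
  exact ⟨LinearMap.toMatrix' g, toLin'.injective <| by rw [toLin'_mul, toLin'_toMatrix', hg]⟩

theorem PosSemidef.exists_eq_conjTranspose_mul_mul_of_ker_le [RCLike 𝕜] {C : Matrix m n 𝕜}
    {D : Matrix n n 𝕜} (hD : D.PosSemidef) (h : ∀ x, C *ᵥ x = 0 → D *ᵥ x = 0) :
    ∃ R : Matrix m m 𝕜, R.PosSemidef ∧ D = Cᴴ * R * C := by
  classical
  obtain ⟨B, rfl⟩ := CStarAlgebra.nonneg_iff_eq_star_mul_self.mp hD.nonneg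
  obtain ⟨X, rfl⟩ := exists_eq_mul_of_ker_le (B := B) fun x hx =>
    (conjTranspose_mul_self_mulVec_eq_zero B x).mp (h x hx)
  refine ⟨Xᴴ * X, posSemidef_conjTranspose_mul_self X, ?_⟩
  simp only [star_eq_conjTranspose, conjTranspose_mul, Matrix.mul_assoc]

end Matrix

theorem stmt3_general (N p : ℕ)
    (C : Matrix (Fin (N - p)) (Fin N) ℝ)
    (D : Matrix (Fin N) (Fin N) ℝ) (hD : D.PosSemidef) :
    (∀ x : Fin N → ℝ, C.mulVec x = 0 → D.mulVec x = 0) ↔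
      ∃ R : Matrix (Fin (N - p)) (Fin (N - p)) ℝ, R.PosSemidef ∧ D = Cᵀ * R * C := by
  simp only [← conjTranspose_eq_transpose_of_trivial]
  refine ⟨hD.exists_eq_conjTranspose_mul_mul_of_ker_le, ?_⟩
  rintro ⟨R, -, rfl⟩ x hx
  rw [← mulVec_mulVec, hx, mulVec_zero]

theorem stmt3 (N p : ℕ)
    (C : Matrix (Fin (N - p)) (Fin N) ℝ) (hC : C.rank = N - p)
    (D : Matrix (Fin N) (Fin N) ℝ) (hD : D.PosSemidef) :
    (∀ x : Fin N → ℝ, C.mulVec x = 0 → D.mulVec x = 0) ↔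
      ∃ R : Matrix (Fin (N - p)) (Fin (N - p)) ℝ, R.PosSemidef ∧ D = Cᵀ * R * C :=
  stmt3_general N p C D hD
end
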